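/- arXiv:math/0502168 — 9 statements merged into one kernel-verified Lean document; each statement's English description precedes it below -/
import Mathlib

section
/- If K is a topological ring whose group of units K× is dense in K and open, and inversion is continuous, then the ring of dual numbers K[ε] (with the product topology) is again a topological ring whose group of units is dense and open, and inversion on units is continuous. -/
/-!
An element of `K[ε]` is a unit exactly when its `K`-component is, so the units of `K[ε]` are the
preimage of `Kˣ` under the first projection; this projection is continuous and open, so the
preimage is open and dense. On units, `(x + εy)⁻¹ = x⁻¹ - ε x⁻¹ y x⁻¹`, which is continuous
because inversion in `K` is.
-/

open TrivSqZeroExt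
open scoped RightActions

namespace TrivSqZeroExt

variable {R M : Type*} [Semiring R] [AddCommGroup M] [Module R M] [Module Rᵐᵒᵖ M]
  [SMulCommClass R Rᵐᵒᵖ M]

theorem preimage_fst_setOf_isUnit :
    (fst : TrivSqZeroExt R M → R) ⁻¹' {r | IsUnit r} = {z : TrivSqZeroExt R M | IsUnit z} :=
  Set.ext fun _ => isUnit_iff_isUnit_fst.symm

/-- Both sides vanish when `z` is not a unit. -/
theorem ring_inverse_eq (z : TrivSqZeroExt R M) :
    Ring.inverse z =
      inl (Ring.inverse z.fst) + inr (-(Ring.inverse z.fst •> z.snd <• Ring.inverse z.fst)) := by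
  by_cases hz : IsUnit z
  · obtain ⟨_⟩ := (isUnit_iff_isUnit_fst.mp hz).nonempty_invertible
    let := invertibleOfInvertibleFst z
    rw [Ring.inverse_invertible, Ring.inverse_invertible]
    ext
    · simp only [fst_add, fst_inl, fst_inr, add_zero, fst_invOf]
    · simp only [snd_add, snd_inl, snd_inr, zero_add, snd_invOf]
  · have hfst : ¬IsUnit z.fst := fun h => hz (isUnit_iff_isUnit_fst.mpr h)
    simp [Ring.inverse_non_unit _ hz, Ring.inverse_non_unit _ hfst]

variable [TopologicalSpace R] [TopologicalSpace M]

theorem isOpen_setOf_isUnit (h : IsOpen {r : R | IsUnit r}) :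
    IsOpen {z : TrivSqZeroExt R M | IsUnit z} :=
  preimage_fst_setOf_isUnit (R := R) (M := M) ▸ h.preimage continuous_fst

theorem dense_setOf_isUnit (h : Dense {r : R | IsUnit r}) :
    Dense {z : TrivSqZeroExt R M | IsUnit z} :=
  preimage_fst_setOf_isUnit (R := R) (M := M) ▸ h.preimage isOpenMap_fst

theorem continuousOn_ring_inverse [ContinuousAdd R] [ContinuousAdd M] [ContinuousNeg M]
    [ContinuousSMul R M] [ContinuousSMul Rᵐᵒᵖ M]
    (h : ContinuousOn (Ring.inverse : R → R) {r | IsUnit r}) :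
    ContinuousOn (Ring.inverse : TrivSqZeroExt R M → TrivSqZeroExt R M) {z | IsUnit z} := by
  have hfst : ContinuousOn (fun z : TrivSqZeroExt R M => Ring.inverse z.fst) {z | IsUnit z} :=
    h.comp continuous_fst.continuousOn fun _ => isUnit_iff_isUnit_fst.mp
  have hsnd : ContinuousOn
      (fun z : TrivSqZeroExt R M => -(Ring.inverse z.fst •> z.snd <• Ring.inverse z.fst))
      {z | IsUnit z} :=
    ((MulOpposite.continuous_op.comp_continuousOn hfst).smul
      (hfst.smul continuous_snd.continuousOn)).neg
  refine ContinuousOn.congr ?_ fun z _ => ring_inverse_eq z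
  exact (continuous_inl.comp_continuousOn hfst).add (continuous_inr.comp_continuousOn hsnd)

end TrivSqZeroExt

theorem dualNumber_topologicalRing_units_dense_open_general
    {K : Type*} [CommRing K] [TopologicalSpace K] [IsTopologicalRing K]
    (hopen : IsOpen {x : K | IsUnit x})
    (hdense : Dense {x : K | IsUnit x})
    (hinv : ContinuousOn (Ring.inverse : K → K) {x : K | IsUnit x}) :
    IsTopologicalRing (DualNumber K) ∧
    IsOpen {z : DualNumber K | IsUnit z} ∧
    Dense {z : DualNumber K | IsUnit z} ∧
    ContinuousOn (Ring.inverse : DualNumber K → DualNumber K) {z : DualNumber K | IsUnit z} :=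
  ⟨inferInstance, isOpen_setOf_isUnit hopen, dense_setOf_isUnit hdense,
    continuousOn_ring_inverse hinv⟩

/-- If `K` is a topological ring whose unit group is open and dense and with continuous
inversion, then the dual numbers `K[ε]` form a topological ring whose unit group is
open and dense and with continuous inversion. -/
theorem dualNumber_topologicalRing_units_dense_open
    {K : Type*} [CommRing K] [TopologicalSpace K] [IsTopologicalRing K] [T2Space K]
    (hopen : IsOpen {x : K | IsUnit x})
    (hdense : Dense {x : K | IsUnit x})
    (hinv : ContinuousOn (Ring.inverse : K → K) {x : K | IsUnit x}) :
    IsTopologicalRing (DualNumber K) ∧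
    IsOpen {z : DualNumber K | IsUnit z} ∧
    Dense {z : DualNumber K | IsUnit z} ∧
    ContinuousOn (Ring.inverse : DualNumber K → DualNumber K) {z : DualNumber K | IsUnit z} :=
  dualNumber_topologicalRing_units_dense_open_general hopen hdense hinv
end

section
/- Let V, W be topological modules over a topological ring K with dense unit group, U ⊆ V open, and f : U → W of class C¹ in the sense that there is a continuous map f^[1] : U^[1] → W with f(x+tv) − f(x) = t·f^[1](x,v,t) for all (x,v,t) with x, x+tv ∈ U. Then for each x ∈ U the differential df(x) : V → W, v ↦ f^[1](x,v,0), is additive: df(x)(v+w) = df(x)v + df(x)w. -/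
/-!
For an invertible `t`, splitting `f (x + t • (v + w)) - f x` at the point `x + t • v` and cancelling
`t` gives `f1 (x, v + w, t) = f1 (x, v, t) + f1 (x + t • v, w, t)`. Both sides are continuous in `t`
on an open neighbourhood of `0`, and units are dense in `K`, so the identity persists at `t = 0`.
-/

open Set

theorem Dense.eqOn_of_eqOn_inter {X Y : Type*} [TopologicalSpace X] [TopologicalSpace Y]
    [T2Space Y] {D O : Set X} (hD : Dense D) (hO : IsOpen O) {g h : X → Y}
    (hg : ContinuousOn g O) (hh : ContinuousOn h O) (hgh : EqOn g h (O ∩ D)) : EqOn g h O :=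
  hgh.of_subset_closure hg hh inter_subset_left (hD.open_subset_closure_inter hO)

theorem differenceQuotient_add_of_isUnit {K V W : Type*} [Ring K]
    [AddCommGroup V] [Module K V] [AddCommGroup W] [Module K W]
    {U : Set V} {f : V → W} {f1 : V × V × K → W}
    (hdiff : ∀ (x v : V) (t : K), x ∈ U → x + t • v ∈ U →
      f (x + t • v) - f x = t • f1 (x, v, t))
    {x v w : V} {t : K} (ht : IsUnit t)
    (hx : x ∈ U) (hxv : x + t • v ∈ U) (hxvw : x + t • v + t • w ∈ U) :
    f1 (x, v + w, t) = f1 (x, v, t) + f1 (x + t • v, w, t) := by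
  have hsum : x + t • (v + w) = x + t • v + t • w := by rw [smul_add, add_assoc]
  rw [← ht.smul_left_cancel, smul_add, ← hdiff x v t hx hxv, ← hdiff _ w t hxv hxvw,
    ← hdiff x (v + w) t hx (hsum ▸ hxvw), hsum]
  abel

theorem differential_additive_general
    {K : Type*} [CommRing K] [TopologicalSpace K]
    {V W : Type*}
    [AddCommGroup V] [Module K V] [TopologicalSpace V]
    [IsTopologicalAddGroup V] [ContinuousSMul K V]
    [AddCommGroup W] [Module K W] [TopologicalSpace W]
    [IsTopologicalAddGroup W] [T2Space W]
    (hdense : Dense {t : K | IsUnit t})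
    {U : Set V} (hU : IsOpen U)
    (f : V → W) (f1 : V × V × K → W)
    (hcont : ContinuousOn f1 {p : V × V × K | p.1 ∈ U ∧ p.1 + p.2.2 • p.2.1 ∈ U})
    (hdiff : ∀ (x v : V) (t : K), x ∈ U → x + t • v ∈ U →
      f (x + t • v) - f x = t • f1 (x, v, t)) :
    ∀ x ∈ U, ∀ v w : V, f1 (x, v + w, 0) = f1 (x, v, 0) + f1 (x, w, 0) := by
  intro x hx v w
  set O : Set K := {t | x + t • v ∈ U ∧ x + t • v + t • w ∈ U}
  have hO : IsOpen O :=
    (hU.preimage (by fun_prop)).inter (hU.preimage (by fun_prop))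
  have hsum : ∀ t : K, x + t • (v + w) = x + t • v + t • w := fun t => by rw [smul_add, add_assoc]
  have hlhs : ContinuousOn (fun t : K => f1 (x, v + w, t)) O :=
    hcont.comp (by fun_prop : Continuous fun t : K => (x, v + w, t)).continuousOn
      fun t ht => ⟨hx, hsum t ▸ ht.2⟩
  have hrhs : ContinuousOn (fun t : K => f1 (x, v, t) + f1 (x + t • v, w, t)) O :=
    (hcont.comp (by fun_prop : Continuous fun t : K => (x, v, t)).continuousOn
      fun t ht => ⟨hx, ht.1⟩).add
    (hcont.comp (by fun_prop : Continuous fun t : K => (x + t • v, w, t)).continuousOn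
      fun _ ht => ht)
  have hunits : EqOn (fun t : K => f1 (x, v + w, t))
      (fun t => f1 (x, v, t) + f1 (x + t • v, w, t)) (O ∩ {t | IsUnit t}) :=
    fun t ⟨⟨hxv, hxvw⟩, ht⟩ => differenceQuotient_add_of_isUnit hdiff ht hx hxv hxvw
  simpa using hdense.eqOn_of_eqOn_inter hO hlhs hrhs hunits (show (0 : K) ∈ O by simp [O, hx])

/-- In the Bertram–Glöckner–Neeb calculus over a topological ring `K` with dense unit
group, the differential `df(x) v = f^[1](x,v,0)` of a `C¹`-map is additive. -/
theorem differential_additive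
    {K : Type*} [CommRing K] [TopologicalSpace K] [IsTopologicalRing K]
    {V W : Type*}
    [AddCommGroup V] [Module K V] [TopologicalSpace V]
    [IsTopologicalAddGroup V] [ContinuousSMul K V]
    [AddCommGroup W] [Module K W] [TopologicalSpace W]
    [IsTopologicalAddGroup W] [ContinuousSMul K W] [T2Space W]
    (hdense : Dense {t : K | IsUnit t})
    {U : Set V} (hU : IsOpen U)
    (f : V → W) (f1 : V × V × K → W)
    (hcont : ContinuousOn f1 {p : V × V × K | p.1 ∈ U ∧ p.1 + p.2.2 • p.2.1 ∈ U})
    (hdiff : ∀ (x v : V) (t : K), x ∈ U → x + t • v ∈ U →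
      f (x + t • v) - f x = t • f1 (x, v, t)) :
    ∀ x ∈ U, ∀ v w : V, f1 (x, v + w, 0) = f1 (x, v, 0) + f1 (x, w, 0) :=
  differential_additive_general hdense hU f f1 hcont hdiff
end

section
/- Under the same C¹ setting, the differential df(x) is homogeneous: df(x)(rv) = r·df(x)v for all r ∈ K, v ∈ V; hence df(x) is K-linear. -/
/-!
Homogeneity and additivity of `v ↦ f1 (x, v, 0)` hold after multiplication by `t`, for all small
`t`, as rearrangements of `f (x + t • v) - f x = t • f1 (x, v, t)`. Since the units are dense,
`t` may be restricted to units and cancelled, and the identities pass to `t = 0` by continuity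
of `f1` on the open set `U^[1]`.
-/

open Filter Topology

section Cancellation

variable {K W : Type*} [Monoid K] [TopologicalSpace K] [MulAction K W] [TopologicalSpace W]
  [T2Space W]

theorem eq_of_smul_eventually_eq_of_dense_isUnit (hdense : Dense {t : K | IsUnit t})
    {g h : K → W} {a : K} (hg : ContinuousAt g a) (hh : ContinuousAt h a)
    (heq : ∀ᶠ t in 𝓝 a, t • g t = t • h t) : g a = h a := by
  have : (𝓝[{t : K | IsUnit t}] a).NeBot := mem_closure_iff_nhdsWithin_neBot.mp (hdense a)
  have hcancel : g =ᶠ[𝓝[{t : K | IsUnit t}] a] h := by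
    filter_upwards [nhdsWithin_le_nhds heq, self_mem_nhdsWithin] with t ht hunit
    exact hunit.smul_left_cancel.mp ht
  exact tendsto_nhds_unique_of_eventuallyEq (hg.tendsto.mono_left nhdsWithin_le_nhds)
    (hh.tendsto.mono_left nhdsWithin_le_nhds) hcancel

end Cancellation

namespace DifferenceQuotient

variable {K V W : Type*} [Ring K] [AddCommGroup V] [Module K V]

variable (K) in
/-- The domain `U^[1]` of the first difference quotient `f^[1]`. -/
def domain (U : Set V) : Set (V × V × K) := {p | p.1 ∈ U ∧ p.1 + p.2.2 • p.2.1 ∈ U}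

theorem mk_zero_mem_domain {U : Set V} {x : V} (hx : x ∈ U) (v : V) :
    ((x, v, 0) : V × V × K) ∈ domain K U :=
  ⟨hx, by simpa using hx⟩

section Topology

variable [TopologicalSpace K] [TopologicalSpace V] [ContinuousAdd V] [ContinuousSMul K V]

theorem isOpen_domain {U : Set V} (hU : IsOpen U) : IsOpen (domain K U) :=
  (hU.prod hU).preimage (by fun_prop : Continuous fun p : V × V × K => (p.1, p.1 + p.2.2 • p.2.1))

theorem eventually_add_smul_mem {U : Set V} (hU : IsOpen U) {x : V} (hx : x ∈ U) (v : V) :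
    ∀ᶠ t in 𝓝 (0 : K), x + t • v ∈ U :=
  (by fun_prop : Continuous fun t : K => x + t • v).continuousAt.preimage_mem_nhds
    (hU.mem_nhds (by simpa using hx))

theorem continuousAt_comp_of_eq_mk_zero [TopologicalSpace W] {f1 : V × V × K → W} {U : Set V}
    (hU : IsOpen U) (hcont : ContinuousOn f1 (domain K U)) {x v : V} (hx : x ∈ U)
    {c : K → V × V × K} (hc : ContinuousAt c 0) (hc0 : c 0 = (x, v, 0)) :
    ContinuousAt (fun t => f1 (c t)) 0 :=
  ContinuousAt.comp_of_eq (hcont.continuousAt ((isOpen_domain hU).mem_nhds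
    (mk_zero_mem_domain hx v))) hc hc0

end Topology

variable [AddCommGroup W] [Module K W]

def IsFirstDifferenceQuotientOn (f : V → W) (f1 : V × V × K → W) (U : Set V) : Prop :=
  ∀ (x v : V) (t : K), x ∈ U → x + t • v ∈ U → f (x + t • v) - f x = t • f1 (x, v, t)

variable {f : V → W} {f1 : V × V × K → W} {U : Set V}

theorem IsFirstDifferenceQuotientOn.smul_apply_smul (hf : IsFirstDifferenceQuotientOn f f1 U)
    {x v : V} {r t : K} (hx : x ∈ U) (hxt : x + t • r • v ∈ U) :
    t • f1 (x, r • v, t) = t • r • f1 (x, v, t * r) := by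
  have hxt' : x + (t * r) • v ∈ U := by rwa [mul_smul]
  rw [← hf x (r • v) t hx hxt, ← mul_smul t r v, hf x v (t * r) hx hxt', mul_smul]

theorem IsFirstDifferenceQuotientOn.smul_apply_add (hf : IsFirstDifferenceQuotientOn f f1 U)
    {x v w : V} {t : K} (hx : x ∈ U) (hxv : x + t • v ∈ U) (hxvw : x + t • (v + w) ∈ U) :
    t • f1 (x, v + w, t) = t • (f1 (x, v, t) + f1 (x + t • v, w, t)) := by
  have hxvw' : x + t • v + t • w ∈ U := by rwa [add_assoc, ← smul_add]
  rw [smul_add, ← hf x (v + w) t hx hxvw, ← hf x v t hx hxv, ← hf (x + t • v) w t hxv hxvw',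
    smul_add, ← add_assoc]
  abel

variable [TopologicalSpace K] [TopologicalSpace V] [ContinuousAdd V] [ContinuousSMul K V]
  [TopologicalSpace W] [T2Space W]

theorem IsFirstDifferenceQuotientOn.apply_smul_zero [ContinuousMul K] [ContinuousConstSMul K W]
    (hdense : Dense {t : K | IsUnit t}) (hU : IsOpen U) (hcont : ContinuousOn f1 (domain K U))
    (hf : IsFirstDifferenceQuotientOn f f1 U) {x : V} (hx : x ∈ U) (r : K) (v : V) :
    f1 (x, r • v, 0) = r • f1 (x, v, 0) := by
  have hlhs : ContinuousAt (fun t : K => f1 (x, r • v, t)) 0 :=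
    continuousAt_comp_of_eq_mk_zero hU hcont hx (by fun_prop) rfl
  have hrhs : ContinuousAt (fun t : K => r • f1 (x, v, t * r)) 0 :=
    (continuousAt_comp_of_eq_mk_zero hU hcont hx (v := v) (by fun_prop) (by simp)).const_smul r
  have key := eq_of_smul_eventually_eq_of_dense_isUnit hdense hlhs hrhs <| by
    filter_upwards [eventually_add_smul_mem hU hx (r • v)] with t ht
    exact hf.smul_apply_smul hx ht
  simpa using key

theorem IsFirstDifferenceQuotientOn.apply_add_zero [ContinuousAdd W]
    (hdense : Dense {t : K | IsUnit t}) (hU : IsOpen U) (hcont : ContinuousOn f1 (domain K U))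
    (hf : IsFirstDifferenceQuotientOn f f1 U) {x : V} (hx : x ∈ U) (v w : V) :
    f1 (x, v + w, 0) = f1 (x, v, 0) + f1 (x, w, 0) := by
  have hlhs : ContinuousAt (fun t : K => f1 (x, v + w, t)) 0 :=
    continuousAt_comp_of_eq_mk_zero hU hcont hx (by fun_prop) rfl
  have hrhs : ContinuousAt (fun t : K => f1 (x, v, t) + f1 (x + t • v, w, t)) 0 :=
    (continuousAt_comp_of_eq_mk_zero hU hcont hx (by fun_prop) rfl).add
      (continuousAt_comp_of_eq_mk_zero hU hcont hx (v := w) (by fun_prop) (by simp))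
  have key := eq_of_smul_eventually_eq_of_dense_isUnit hdense hlhs hrhs <| by
    filter_upwards [eventually_add_smul_mem hU hx v,
      eventually_add_smul_mem hU hx (v + w)] with t hv hvw
    exact hf.smul_apply_add hx hv hvw
  simpa using key

def differential [ContinuousMul K] [ContinuousConstSMul K W] [ContinuousAdd W]
    (hdense : Dense {t : K | IsUnit t}) (hU : IsOpen U) (hcont : ContinuousOn f1 (domain K U))
    (hf : IsFirstDifferenceQuotientOn f f1 U) {x : V} (hx : x ∈ U) : V →ₗ[K] W where
  toFun v := f1 (x, v, 0)
  map_add' := hf.apply_add_zero hdense hU hcont hx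
  map_smul' := hf.apply_smul_zero hdense hU hcont hx

end DifferenceQuotient

open DifferenceQuotient in
/-- In the Bertram–Glöckner–Neeb calculus over a topological ring `K` with dense unit
group, the differential `df(x) v = f^[1](x,v,0)` of a `C¹`-map is homogeneous,
hence `K`-linear. -/
theorem differential_homogeneous_and_linear
    {K : Type*} [CommRing K] [TopologicalSpace K] [IsTopologicalRing K]
    {V W : Type*}
    [AddCommGroup V] [Module K V] [TopologicalSpace V]
    [IsTopologicalAddGroup V] [ContinuousSMul K V]
    [AddCommGroup W] [Module K W] [TopologicalSpace W]
    [IsTopologicalAddGroup W] [ContinuousSMul K W] [T2Space W]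
    (hdense : Dense {t : K | IsUnit t})
    {U : Set V} (hU : IsOpen U)
    (f : V → W) (f1 : V × V × K → W)
    (hcont : ContinuousOn f1 {p : V × V × K | p.1 ∈ U ∧ p.1 + p.2.2 • p.2.1 ∈ U})
    (hdiff : ∀ (x v : V) (t : K), x ∈ U → x + t • v ∈ U →
      f (x + t • v) - f x = t • f1 (x, v, t)) :
    ∀ x ∈ U,
      (∀ (r : K) (v : V), f1 (x, r • v, 0) = r • f1 (x, v, 0)) ∧
      ∃ L : V →ₗ[K] W, ∀ v : V, L v = f1 (x, v, 0) := by
  have hf : IsFirstDifferenceQuotientOn f f1 U := hdiff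
  intro x hx
  exact ⟨hf.apply_smul_zero hdense hU hcont hx, differential hdense hU hcont hf hx, fun _ => rfl⟩
end

section
/- If f : U → W and g : U' → W' are of class C¹ (over a topological ring K with dense unit group) with f(U) ⊆ U', then g ∘ f is of class C¹ with (g∘f)^[1](x,y,t) = g^[1](f(x), f^[1](x,y,t), t); in particular d(g∘f)(x) = dg(f(x)) ∘ df(x). -/
/-!
From `f x + t • f^[1](x, v, t) = f (x + t • v)` one sees that `(f x, f^[1](x, v, t), t)` lies in
`U'^[1]` whenever `(x, v, t) ∈ U^[1]`, and the difference quotient of `g` at that point is the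
one of `g ∘ f` at `(x, v, t)`; continuity is that of a composite of continuous maps.
-/

/-- The paper's `U^[1]`. -/
def diffQuotDomain (K : Type*) {V : Type*} [Ring K] [AddCommGroup V] [Module K V] (U : Set V) :
    Set (V × V × K) :=
  {p | p.1 ∈ U ∧ p.1 + p.2.2 • p.2.1 ∈ U}

section DiffQuot

variable {K V W W' : Type*} [Ring K]
  [AddCommGroup V] [Module K V] [AddCommGroup W] [Module K W] [AddCommGroup W'] [Module K W']

def HasDiffQuotOn (f : V → W) (f1 : V × V × K → W) (U : Set V) : Prop :=
  ∀ (x v : V) (t : K), x ∈ U → x + t • v ∈ U → f (x + t • v) - f x = t • f1 (x, v, t)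

namespace HasDiffQuotOn

variable {f : V → W} {f1 : V × V × K → W} {U : Set V}

theorem add_smul_eq (hf : HasDiffQuotOn f f1 U) {p : V × V × K} (hp : p ∈ diffQuotDomain K U) :
    f p.1 + p.2.2 • f1 p = f (p.1 + p.2.2 • p.2.1) :=
  (sub_eq_iff_eq_add'.mp (hf p.1 p.2.1 p.2.2 hp.1 hp.2)).symm

theorem mapsTo_diffQuotDomain (hf : HasDiffQuotOn f f1 U) {U' : Set W} (hmaps : Set.MapsTo f U U') :
    Set.MapsTo (fun p : V × V × K => (f p.1, f1 p, p.2.2))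
      (diffQuotDomain K U) (diffQuotDomain K U') :=
  fun _ hp => ⟨hmaps hp.1, hf.add_smul_eq hp ▸ hmaps hp.2⟩

theorem comp {g : W → W'} {g1 : W × W × K → W'} {U' : Set W} (hg : HasDiffQuotOn g g1 U')
    (hf : HasDiffQuotOn f f1 U) (hmaps : Set.MapsTo f U U') :
    HasDiffQuotOn (g ∘ f) (fun p => g1 (f p.1, f1 p, p.2.2)) U := by
  intro x v t hx hxt
  have hp : (x, v, t) ∈ diffQuotDomain K U := ⟨hx, hxt⟩
  have hq := hf.mapsTo_diffQuotDomain hmaps hp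
  simpa only [Function.comp, ← hf.add_smul_eq hp] using hg (f x) (f1 (x, v, t)) t hq.1 hq.2

end HasDiffQuotOn

end DiffQuot

theorem ContinuousOn.diffQuotDomain_prodMk {K V W : Type*} [Ring K] [TopologicalSpace K]
    [AddCommGroup V] [Module K V] [TopologicalSpace V] [TopologicalSpace W]
    {f : V → W} {f1 : V × V × K → W} {U : Set V}
    (hfc : ContinuousOn f U) (hf1c : ContinuousOn f1 (diffQuotDomain K U)) :
    ContinuousOn (fun p : V × V × K => (f p.1, f1 p, p.2.2)) (diffQuotDomain K U) :=
  (hfc.comp continuousOn_fst fun _ hp => hp.1).prodMk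
    (hf1c.prodMk (continuous_snd.comp continuous_snd).continuousOn)

theorem chain_rule_C1_general
    {K : Type*} [CommRing K] [TopologicalSpace K]
    {V W W' : Type*}
    [AddCommGroup V] [Module K V] [TopologicalSpace V]
    [AddCommGroup W] [Module K W] [TopologicalSpace W]
    [AddCommGroup W'] [Module K W'] [TopologicalSpace W']
    {U : Set V} {U' : Set W}
    (f : V → W) (f1 : V × V × K → W)
    (g : W → W') (g1 : W × W × K → W')
    (hmaps : Set.MapsTo f U U')
    (hfc : ContinuousOn f U)
    (hf1c : ContinuousOn f1 {p : V × V × K | p.1 ∈ U ∧ p.1 + p.2.2 • p.2.1 ∈ U})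
    (hg1c : ContinuousOn g1 {p : W × W × K | p.1 ∈ U' ∧ p.1 + p.2.2 • p.2.1 ∈ U'})
    (hfd : ∀ (x v : V) (t : K), x ∈ U → x + t • v ∈ U →
      f (x + t • v) - f x = t • f1 (x, v, t))
    (hgd : ∀ (x v : W) (t : K), x ∈ U' → x + t • v ∈ U' →
      g (x + t • v) - g x = t • g1 (x, v, t)) :
    ContinuousOn (fun p : V × V × K => g1 (f p.1, f1 p, p.2.2))
      {p : V × V × K | p.1 ∈ U ∧ p.1 + p.2.2 • p.2.1 ∈ U} ∧
    (∀ (x v : V) (t : K), x ∈ U → x + t • v ∈ U →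
      g (f (x + t • v)) - g (f x) = t • g1 (f x, f1 (x, v, t), t)) :=
  have hf : HasDiffQuotOn f f1 U := hfd
  ⟨hg1c.comp (hfc.diffQuotDomain_prodMk hf1c) (hf.mapsTo_diffQuotDomain hmaps),
    HasDiffQuotOn.comp hgd hf hmaps⟩

/-- Chain rule in the Bertram–Glöckner–Neeb calculus: if `f` and `g` are of class `C¹`
and composable, then `g ∘ f` is of class `C¹` with
`(g∘f)^[1](x,y,t) = g^[1](f(x), f^[1](x,y,t), t)`;
in particular `d(g∘f)(x) = dg(f(x)) ∘ df(x)`. -/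
theorem chain_rule_C1
    {K : Type*} [CommRing K] [TopologicalSpace K] [IsTopologicalRing K]
    {V W W' : Type*}
    [AddCommGroup V] [Module K V] [TopologicalSpace V]
    [IsTopologicalAddGroup V] [ContinuousSMul K V]
    [AddCommGroup W] [Module K W] [TopologicalSpace W]
    [IsTopologicalAddGroup W] [ContinuousSMul K W] [T2Space W]
    [AddCommGroup W'] [Module K W'] [TopologicalSpace W']
    [IsTopologicalAddGroup W'] [ContinuousSMul K W'] [T2Space W']
    (hdense : Dense {t : K | IsUnit t})
    {U : Set V} (hU : IsOpen U) {U' : Set W} (hU' : IsOpen U')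
    (f : V → W) (f1 : V × V × K → W)
    (g : W → W') (g1 : W × W × K → W')
    (hmaps : Set.MapsTo f U U')
    (hfc : ContinuousOn f U) (hgc : ContinuousOn g U')
    (hf1c : ContinuousOn f1 {p : V × V × K | p.1 ∈ U ∧ p.1 + p.2.2 • p.2.1 ∈ U})
    (hg1c : ContinuousOn g1 {p : W × W × K | p.1 ∈ U' ∧ p.1 + p.2.2 • p.2.1 ∈ U'})
    (hfd : ∀ (x v : V) (t : K), x ∈ U → x + t • v ∈ U →
      f (x + t • v) - f x = t • f1 (x, v, t))
    (hgd : ∀ (x v : W) (t : K), x ∈ U' → x + t • v ∈ U' →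
      g (x + t • v) - g x = t • g1 (x, v, t)) :
    ContinuousOn (fun p : V × V × K => g1 (f p.1, f1 p, p.2.2))
      {p : V × V × K | p.1 ∈ U ∧ p.1 + p.2.2 • p.2.1 ∈ U} ∧
    (∀ (x v : V) (t : K), x ∈ U → x + t • v ∈ U →
      g (f (x + t • v)) - g (f x) = t • g1 (f x, f1 (x, v, t), t)) :=
  chain_rule_C1_general f f1 g g1 hmaps hfc hf1c hg1c hfd hgd
end

section
/- If U is an open neighborhood of 0 in a topological K-module V, 2 is not assumed invertible, K has dense unit group, and f : U → W is of class C² and homogeneous of degree 2 (f(rx) = r²f(x) whenever x, rx ∈ U), then f is a W-valued quadratic form: f(v+w) − f(v) − f(w) is bilinear in (v,w) and f(rv) = r²f(v). -/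
/-!
Homogeneity gives `f 0 = 0` and, along the ray through `h ∈ U`, the identity
`t² • (f h - a₂(0, h)) = t • df(0, h) + t² • R₂(0, h, t)` for all small `t`. For a unit `t` one
may cancel `t`; letting `t → 0` through the dense set of units kills `df(0, h)`, and cancelling
`t` once more and letting `t → 0` again gives `f h = a₂(0, h)`, because `R₂(0, h, 0) = 0`.
Hence `f` coincides with `a₂(0, ·)` on `U`, whose polarization is the bilinear map `d²f(0)`.
-/

open Topology Filter

theorem Dense.eq_of_continuousAt {X Y : Type*} [TopologicalSpace X] [TopologicalSpace Y]
    [T2Space Y] {D : Set X} (hD : Dense D) {f g : X → Y} {x : X}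
    (hf : ContinuousAt f x) (hg : ContinuousAt g x) (h : ∀ᶠ t in 𝓝 x, t ∈ D → f t = g t) :
    f x = g x :=
  haveI := mem_closure_iff_nhdsWithin_neBot.mp (hD x)
  tendsto_nhds_unique_of_eventuallyEq (hf.tendsto.mono_left nhdsWithin_le_nhds)
    (hg.tendsto.mono_left nhdsWithin_le_nhds) (eventually_nhdsWithin_iff.mpr h)

theorem eq_zero_of_eventually_sq_smul_eq {K W : Type*} [CommRing K] [TopologicalSpace K]
    [AddCommGroup W] [Module K W] [TopologicalSpace W] [ContinuousAdd W] [ContinuousSMul K W]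
    [T2Space W] (hdense : Dense {t : K | IsUnit t}) {c d : W} {ψ : K → W}
    (hψ : ContinuousAt ψ 0) (hψ0 : ψ 0 = 0)
    (h : ∀ᶠ t in 𝓝 0, t ^ 2 • c = t • d + t ^ 2 • ψ t) :
    d = 0 ∧ c = 0 := by
  have hunit : ∀ᶠ t in 𝓝 (0 : K), IsUnit t → t • c = d + t • ψ t :=
    h.mono fun t ht hu => hu.smul_left_cancel.mp <| by
      rwa [smul_smul, smul_add, smul_smul, ← sq]
  have hd : d = 0 := by
    have := hdense.eq_of_continuousAt (continuousAt_id.smul continuousAt_const)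
      (continuousAt_const.add (continuousAt_id.smul hψ)) hunit
    simpa [eq_comm] using this
  refine ⟨hd, ?_⟩
  have := hdense.eq_of_continuousAt continuousAt_const hψ <|
    hunit.mono fun t ht hu => hu.smul_left_cancel.mp <| by rw [ht hu, hd, zero_add]
  rwa [hψ0] at this

theorem eq_secondOrderCoeff_of_taylor_of_homogeneous {K V W : Type*} [CommRing K]
    [TopologicalSpace K] [AddCommGroup V] [Module K V] [TopologicalSpace V] [ContinuousSMul K V]
    [AddCommGroup W] [Module K W] [TopologicalSpace W] [IsTopologicalAddGroup W]
    [ContinuousSMul K W] [T2Space W] (hdense : Dense {t : K | IsUnit t})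
    {U : Set V} (hU : IsOpen U) (h0 : (0 : V) ∈ U)
    {f : V → W} {df a2 : V → V → W} {R2 : V → V → K → W}
    (htaylor : ∀ (x h : V) (t : K), x ∈ U → x + t • h ∈ U →
      f (x + t • h) = f x + t • df x h + t ^ 2 • a2 x h + t ^ 2 • R2 x h t)
    (hR2c : ContinuousOn (fun p : V × V × K => R2 p.1 p.2.1 p.2.2)
      {p : V × V × K | p.1 ∈ U ∧ p.1 + p.2.2 • p.2.1 ∈ U})
    (hR20 : ∀ x h : V, R2 x h 0 = 0)
    (hhom : ∀ (r : K) (x : V), x ∈ U → r • x ∈ U → f (r • x) = r ^ 2 • f x)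
    {h : V} (hh : h ∈ U) :
    f h = a2 0 h := by
  have hf0 : f 0 = 0 := by simpa using hhom 0 0 h0 (by simpa using h0)
  have hray : {t : K | t • h ∈ U} ∈ 𝓝 0 :=
    (hU.preimage (continuous_id.smul continuous_const)).mem_nhds (by simpa using h0)
  have hR : ContinuousAt (R2 0 h) 0 :=
    ((hR2c ((0 : V), h, 0) ⟨h0, by simpa using h0⟩).comp
      (f := fun t : K => ((0 : V), h, t)) (by fun_prop : Continuous _).continuousWithinAt
      fun t ht => ⟨h0, by simpa using ht⟩).continuousAt hray
  have hexp : ∀ᶠ t in 𝓝 (0 : K), t ^ 2 • (f h - a2 0 h) = t • df 0 h + t ^ 2 • R2 0 h t := by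
    filter_upwards [hray] with t ht
    have := htaylor 0 h t h0 (by simpa using ht)
    rw [zero_add, hhom t h hh ht, hf0, zero_add] at this
    rw [smul_sub, this]
    abel
  exact sub_eq_zero.mp (eq_zero_of_eventually_sq_smul_eq hdense hR (hR20 0 h) hexp).2

theorem homogeneous_degree_two_is_quadratic_general
    {K : Type*} [CommRing K] [TopologicalSpace K]
    {V W : Type*}
    [AddCommGroup V] [Module K V] [TopologicalSpace V]
    [ContinuousSMul K V]
    [AddCommGroup W] [Module K W] [TopologicalSpace W]
    [IsTopologicalAddGroup W] [ContinuousSMul K W] [T2Space W]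
    (hdense : Dense {t : K | IsUnit t})
    {U : Set V} (hU : IsOpen U) (h0 : (0 : V) ∈ U)
    (f : V → W) (df : V → V → W) (a2 : V → V → W) (R2 : V → V → K → W)
    (htaylor : ∀ (x h : V) (t : K), x ∈ U → x + t • h ∈ U →
      f (x + t • h) = f x + t • df x h + t ^ 2 • a2 x h + t ^ 2 • R2 x h t)
    (hR2c : ContinuousOn (fun p : V × V × K => R2 p.1 p.2.1 p.2.2)
      {p : V × V × K | p.1 ∈ U ∧ p.1 + p.2.2 • p.2.1 ∈ U})
    (hR20 : ∀ x h : V, R2 x h 0 = 0)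
    (d2 : V →ₗ[K] V →ₗ[K] W)
    (hpol : ∀ v w : V, a2 0 (v + w) - a2 0 v - a2 0 w = d2 v w)
    (hhom : ∀ (r : K) (x : V), x ∈ U → r • x ∈ U → f (r • x) = r ^ 2 • f x) :
    (∀ v w : V, v ∈ U → w ∈ U → v + w ∈ U → f (v + w) - f v - f w = d2 v w) ∧
    (∀ (r : K) (v : V), v ∈ U → r • v ∈ U → f (r • v) = r ^ 2 • f v) := by
  have key : ∀ h ∈ U, f h = a2 0 h := fun h hh =>
    eq_secondOrderCoeff_of_taylor_of_homogeneous hdense hU h0 htaylor hR2c hR20 hhom hh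
  refine ⟨fun v w hv hw hvw => ?_, hhom⟩
  rw [key _ hvw, key _ hv, key _ hw, hpol]

/-- If `f : U → W` is `C²` (in the sense of admitting a second order Taylor expansion
with continuous remainder vanishing at `t = 0` and with bilinear polarized second-order
coefficient) on an open neighborhood `U` of `0` and homogeneous of degree `2`, then `f`
is a `W`-valued quadratic form: `f(v+w) − f(v) − f(w)` is bilinear and `f(rv) = r²f(v)`. -/
theorem homogeneous_degree_two_is_quadratic
    {K : Type*} [CommRing K] [TopologicalSpace K] [IsTopologicalRing K]
    {V W : Type*}
    [AddCommGroup V] [Module K V] [TopologicalSpace V]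
    [IsTopologicalAddGroup V] [ContinuousSMul K V]
    [AddCommGroup W] [Module K W] [TopologicalSpace W]
    [IsTopologicalAddGroup W] [ContinuousSMul K W] [T2Space W]
    (hdense : Dense {t : K | IsUnit t})
    {U : Set V} (hU : IsOpen U) (h0 : (0 : V) ∈ U)
    (f : V → W) (df : V → V → W) (a2 : V → V → W) (R2 : V → V → K → W)
    (htaylor : ∀ (x h : V) (t : K), x ∈ U → x + t • h ∈ U →
      f (x + t • h) = f x + t • df x h + t ^ 2 • a2 x h + t ^ 2 • R2 x h t)
    (hR2c : ContinuousOn (fun p : V × V × K => R2 p.1 p.2.1 p.2.2)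
      {p : V × V × K | p.1 ∈ U ∧ p.1 + p.2.2 • p.2.1 ∈ U})
    (hR20 : ∀ x h : V, R2 x h 0 = 0)
    (ha2c : ContinuousOn (fun p : V × V => a2 p.1 p.2) (U ×ˢ (Set.univ : Set V)))
    (d2 : V →ₗ[K] V →ₗ[K] W)
    (hpol : ∀ v w : V, a2 0 (v + w) - a2 0 v - a2 0 w = d2 v w)
    (hhom : ∀ (r : K) (x : V), x ∈ U → r • x ∈ U → f (r • x) = r ^ 2 • f x) :
    (∀ v w : V, v ∈ U → w ∈ U → v + w ∈ U → f (v + w) - f v - f w = d2 v w) ∧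
    (∀ (r : K) (v : V), v ∈ U → r • v ∈ U → f (r • v) = r ^ 2 • f v) :=
  homogeneous_degree_two_is_quadratic_general hdense hU h0 f df a2 R2 htaylor hR2c hR20 d2 hpol hhom
end

section
/- For a C²-map f : U → W over K, the second-order Taylor coefficient satisfies the polarization identity a₂(x, v+w) − a₂(x,v) − a₂(x,w) = d²f(x)(v,w), where d²f(x)(v,w) = ∂_v ∂_w f(x); in particular 2·a₂(x,h) = d²f(x)(h,h). -/
/-!
Expanding `f` at `x` along `v`, `w` and `v + w` to second order and comparing with the mixed
second difference `f(x+t(v+w)) - f(x+tw) - f(x+tv) + f(x) = t² f^[2]((x,v,t),(w,0,0),t)` gives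
`t • A + t² • G t = 0` near `t = 0`, with `G` continuous and `G 0` the defect of the polarization
identity. Cancelling `t` at units and passing to the limit through the dense set of units kills
first `A`, then `G 0`. The same argument applied to `c • h` and `h` gives `a₂(x, c h) = c² a₂(x, h)`,
which turns polarization at `v = w = h` into `2 a₂(x, h) = d²f(x)(h, h)`.
-/

open Set

section DenseUnits

variable {K : Type*} [CommRing K] [TopologicalSpace K]

theorem eqOn_zero_of_eq_zero_of_isUnit {W : Type*} [Zero W] [TopologicalSpace W] [T2Space W]
    (hdense : Dense {t : K | IsUnit t}) {O : Set K} (hO : IsOpen O) {g : K → W}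
    (hg : ContinuousOn g O) (hunit : ∀ t ∈ O, IsUnit t → g t = 0) : EqOn g 0 O :=
  EqOn.of_subset_closure (fun t ht => hunit t ht.1 ht.2) hg continuousOn_const inter_subset_left
    (hdense.open_subset_closure_inter hO)

theorem apply_zero_eq_zero_of_smul_add_sq_smul_eq_zero {W : Type*} [AddCommGroup W] [Module K W]
    [TopologicalSpace W] [ContinuousAdd W] [ContinuousSMul K W] [T2Space W]
    (hdense : Dense {t : K | IsUnit t}) {O : Set K} (hO : IsOpen O) (h0 : (0 : K) ∈ O)
    {A : W} {G : K → W} (hG : ContinuousOn G O) (hzero : ∀ t ∈ O, t • A + t ^ 2 • G t = 0) :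
    G 0 = 0 := by
  have hcancel : ∀ t ∈ O, IsUnit t → A + t • G t = 0 := fun t ht hu => by
    rw [← hu.smul_eq_zero, smul_add, smul_smul, ← sq]
    exact hzero t ht
  have hA : A = 0 := by
    simpa using eqOn_zero_of_eq_zero_of_isUnit hdense hO
      (continuousOn_const.add (continuousOn_id.smul hG)) hcancel h0
  refine eqOn_zero_of_eq_zero_of_isUnit hdense hO hG (fun t ht hu => ?_) h0
  simpa [hA, hu.smul_eq_zero] using hcancel t ht hu

end DenseUnits

theorem prod_mk_add_smul_mk_zero {K V : Type*} [CommRing K] [AddCommGroup V] [Module K V]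
    (x v w : V) (t : K) : ((x, v, t) + t • (w, 0, 0) : V × V × K) = (x + t • w, v, t) := by
  simp

theorem mixed_second_difference_eq {K V W : Type*} [CommRing K] [AddCommGroup V] [Module K V]
    [AddCommGroup W] [Module K W] {U : Set V} {f : V → W} {f1 : V × V × K → W}
    {f2 : (V × V × K) × (V × V × K) × K → W}
    (hf1d : ∀ (x v : V) (t : K), x ∈ U → x + t • v ∈ U →
      f (x + t • v) - f x = t • f1 (x, v, t))
    (hf2d : ∀ (p q : V × V × K) (t : K),
      (p.1 ∈ U ∧ p.1 + p.2.2 • p.2.1 ∈ U) →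
      ((p + t • q).1 ∈ U ∧ (p + t • q).1 + (p + t • q).2.2 • (p + t • q).2.1 ∈ U) →
      f1 (p + t • q) - f1 p = t • f2 (p, q, t))
    {x v w : V} {t : K} (hx : x ∈ U) (hv : x + t • v ∈ U) (hw : x + t • w ∈ U)
    (hvw : x + t • (v + w) ∈ U) :
    f (x + t • (v + w)) - f (x + t • w) - f (x + t • v) + f x =
      t ^ 2 • f2 ((x, v, t), (w, 0, 0), t) := by
  have hpt : x + t • w + t • v = x + t • (v + w) := by rw [smul_add]; abel
  have hstep_w := hf1d (x + t • w) v t hw (by rwa [hpt])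
  rw [hpt] at hstep_w
  have hstep_v := hf1d x v t hx hv
  have hcross := hf2d (x, v, t) (w, 0, 0) t ⟨hx, hv⟩
    (by rw [prod_mk_add_smul_mk_zero]; exact ⟨hw, by rwa [hpt]⟩)
  rw [prod_mk_add_smul_mk_zero] at hcross
  linear_combination (norm := module) hstep_w - hstep_v + t • hcross

section Lines

variable {K V W : Type*} [CommRing K] [TopologicalSpace K]
  [AddCommGroup V] [Module K V] [TopologicalSpace V]
  [TopologicalSpace W] {U : Set V}

theorem isOpen_setOf_add_smul_mem [ContinuousAdd V] [ContinuousSMul K V] (hU : IsOpen U)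
    (x v : V) : IsOpen {t : K | x + t • v ∈ U} :=
  hU.preimage (continuous_const.add (continuous_id.smul continuous_const))

theorem ContinuousOn.along_ray {R : V → V → K → W}
    (hR : ContinuousOn (fun p : V × V × K => R p.1 p.2.1 p.2.2)
      {p : V × V × K | p.1 ∈ U ∧ p.1 + p.2.2 • p.2.1 ∈ U})
    {x : V} (hx : x ∈ U) (h : V) : ContinuousOn (R x h) {t : K | x + t • h ∈ U} :=
  hR.comp (by fun_prop : Continuous fun t : K => (x, h, t)).continuousOn fun _ ht => ⟨hx, ht⟩

theorem ContinuousOn.along_mixed_shift {f2 : (V × V × K) × (V × V × K) × K → W}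
    (hf2c : ContinuousOn f2 {q : (V × V × K) × (V × V × K) × K |
      (q.1.1 ∈ U ∧ q.1.1 + q.1.2.2 • q.1.2.1 ∈ U) ∧
      ((q.1 + q.2.2 • q.2.1).1 ∈ U ∧
        (q.1 + q.2.2 • q.2.1).1 + (q.1 + q.2.2 • q.2.1).2.2 • (q.1 + q.2.2 • q.2.1).2.1 ∈ U)})
    {x : V} (hx : x ∈ U) (v w : V) :
    ContinuousOn (fun t : K => f2 ((x, v, t), (w, 0, 0), t))
      ({t | x + t • v ∈ U} ∩ {t | x + t • w ∈ U} ∩ {t | x + t • (v + w) ∈ U}) := by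
  have hpath : Continuous fun t : K => ((x, v, t), ((w, 0, 0) : V × V × K), t) := by fun_prop
  refine hf2c.comp hpath.continuousOn ?_
  rintro t ⟨⟨hv, hw⟩, hvw⟩
  refine ⟨⟨hx, hv⟩, ?_⟩
  simp only [prod_mk_add_smul_mk_zero]
  exact ⟨hw, by rwa [add_assoc, ← smul_add, add_comm w]⟩

end Lines

section TaylorCoefficient

variable {K V W : Type*} [CommRing K] [TopologicalSpace K]
  [AddCommGroup V] [Module K V] [TopologicalSpace V] [ContinuousAdd V] [ContinuousSMul K V]
  [AddCommGroup W] [Module K W] [TopologicalSpace W] [IsTopologicalAddGroup W]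
  [ContinuousSMul K W] [T2Space W] {U : Set V} {f : V → W} {f1 : V × V × K → W} {a2 : V → V → W}
  {R2 : V → V → K → W}

theorem taylorCoeff_add_sub_sub {f2 : (V × V × K) × (V × V × K) × K → W}
    (hdense : Dense {t : K | IsUnit t}) (hU : IsOpen U)
    (hf1d : ∀ (x v : V) (t : K), x ∈ U → x + t • v ∈ U →
      f (x + t • v) - f x = t • f1 (x, v, t))
    (hf2c : ContinuousOn f2 {q : (V × V × K) × (V × V × K) × K |
      (q.1.1 ∈ U ∧ q.1.1 + q.1.2.2 • q.1.2.1 ∈ U) ∧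
      ((q.1 + q.2.2 • q.2.1).1 ∈ U ∧
        (q.1 + q.2.2 • q.2.1).1 + (q.1 + q.2.2 • q.2.1).2.2 • (q.1 + q.2.2 • q.2.1).2.1 ∈ U)})
    (hf2d : ∀ (p q : V × V × K) (t : K),
      (p.1 ∈ U ∧ p.1 + p.2.2 • p.2.1 ∈ U) →
      ((p + t • q).1 ∈ U ∧ (p + t • q).1 + (p + t • q).2.2 • (p + t • q).2.1 ∈ U) →
      f1 (p + t • q) - f1 p = t • f2 (p, q, t))
    (htaylor : ∀ (x h : V) (t : K), x ∈ U → x + t • h ∈ U →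
      f (x + t • h) = f x + t • f1 (x, h, 0) + t ^ 2 • a2 x h + t ^ 2 • R2 x h t)
    (hR2c : ContinuousOn (fun p : V × V × K => R2 p.1 p.2.1 p.2.2)
      {p : V × V × K | p.1 ∈ U ∧ p.1 + p.2.2 • p.2.1 ∈ U})
    (hR20 : ∀ x h : V, R2 x h 0 = 0) {x : V} (hx : x ∈ U) (v w : V) :
    a2 x (v + w) - a2 x v - a2 x w = f2 ((x, v, 0), (w, 0, 0), 0) := by
  set O : Set K := {t | x + t • v ∈ U} ∩ {t | x + t • w ∈ U} ∩ {t | x + t • (v + w) ∈ U}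
  have hO : IsOpen O := ((isOpen_setOf_add_smul_mem hU x v).inter
    (isOpen_setOf_add_smul_mem hU x w)).inter (isOpen_setOf_add_smul_mem hU x (v + w))
  have h0 : (0 : K) ∈ O := by simp [O, hx]
  set G : K → W := fun t => (a2 x (v + w) - a2 x v - a2 x w) +
    (R2 x (v + w) t - R2 x v t - R2 x w t) - f2 ((x, v, t), (w, 0, 0), t)
  have hG : ContinuousOn G O :=
    ((continuousOn_const.add ((((hR2c.along_ray hx (v + w)).mono fun _ ht => ht.2).sub
      ((hR2c.along_ray hx v).mono fun _ ht => ht.1.1)).sub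
      ((hR2c.along_ray hx w).mono fun _ ht => ht.1.2))).sub (hf2c.along_mixed_shift hx v w))
  have hexpansion : ∀ t ∈ O,
      t • (f1 (x, v + w, 0) - f1 (x, v, 0) - f1 (x, w, 0)) + t ^ 2 • G t = 0 := by
    rintro t ⟨⟨hv, hw⟩, hvw⟩
    linear_combination (norm := module) htaylor x v t hx hv + htaylor x w t hx hw -
      htaylor x (v + w) t hx hvw + mixed_second_difference_eq hf1d hf2d hx hv hw hvw
  simpa [G, hR20, sub_eq_zero] using
    apply_zero_eq_zero_of_smul_add_sq_smul_eq_zero hdense hO h0 hG hexpansion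

theorem taylorCoeff_smul [ContinuousMul K] (hdense : Dense {t : K | IsUnit t}) (hU : IsOpen U)
    (htaylor : ∀ (x h : V) (t : K), x ∈ U → x + t • h ∈ U →
      f (x + t • h) = f x + t • f1 (x, h, 0) + t ^ 2 • a2 x h + t ^ 2 • R2 x h t)
    (hR2c : ContinuousOn (fun p : V × V × K => R2 p.1 p.2.1 p.2.2)
      {p : V × V × K | p.1 ∈ U ∧ p.1 + p.2.2 • p.2.1 ∈ U})
    (hR20 : ∀ x h : V, R2 x h 0 = 0) {x : V} (hx : x ∈ U) (c : K) (h : V) :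
    a2 x (c • h) = c ^ 2 • a2 x h := by
  set O : Set K := {t | x + t • (c • h) ∈ U}
  have h0 : (0 : K) ∈ O := by simp [O, hx]
  have hpt : ∀ t : K, x + (t * c) • h = x + t • (c • h) := fun t => by rw [mul_smul]
  set G : K → W := fun t => (a2 x (c • h) - c ^ 2 • a2 x h) +
    (R2 x (c • h) t - c ^ 2 • R2 x h (t * c))
  have hG : ContinuousOn G O := by
    refine continuousOn_const.add ((hR2c.along_ray hx (c • h)).sub
      (((hR2c.along_ray hx h).comp (continuous_mul_const c).continuousOn ?_).const_smul _))
    intro t ht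
    simpa [hpt] using ht
  have hexpansion : ∀ t ∈ O, t • (f1 (x, c • h, 0) - c • f1 (x, h, 0)) + t ^ 2 • G t = 0 := by
    intro t ht
    have hscaled := htaylor x h (t * c) hx (by rwa [hpt])
    rw [hpt] at hscaled
    linear_combination (norm := module) hscaled - htaylor x (c • h) t hx ht
  simpa [G, hR20, sub_eq_zero] using apply_zero_eq_zero_of_smul_add_sq_smul_eq_zero hdense
    (isOpen_setOf_add_smul_mem hU x (c • h)) h0 hG hexpansion

end TaylorCoefficient

theorem taylor_coefficient_polarization_general
    {K : Type*} [CommRing K] [TopologicalSpace K] [IsTopologicalRing K]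
    {V W : Type*}
    [AddCommGroup V] [Module K V] [TopologicalSpace V]
    [IsTopologicalAddGroup V] [ContinuousSMul K V]
    [AddCommGroup W] [Module K W] [TopologicalSpace W]
    [IsTopologicalAddGroup W] [ContinuousSMul K W] [T2Space W]
    (hdense : Dense {t : K | IsUnit t})
    {U : Set V} (hU : IsOpen U)
    (f : V → W) (f1 : V × V × K → W)
    (f2 : (V × V × K) × (V × V × K) × K → W)
    (a2 : V → V → W) (R2 : V → V → K → W)
    (hf1d : ∀ (x v : V) (t : K), x ∈ U → x + t • v ∈ U →
      f (x + t • v) - f x = t • f1 (x, v, t))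
    (hf2c : ContinuousOn f2 {q : (V × V × K) × (V × V × K) × K |
      (q.1.1 ∈ U ∧ q.1.1 + q.1.2.2 • q.1.2.1 ∈ U) ∧
      ((q.1 + q.2.2 • q.2.1).1 ∈ U ∧
        (q.1 + q.2.2 • q.2.1).1 + (q.1 + q.2.2 • q.2.1).2.2 • (q.1 + q.2.2 • q.2.1).2.1 ∈ U)})
    (hf2d : ∀ (p q : V × V × K) (t : K),
      (p.1 ∈ U ∧ p.1 + p.2.2 • p.2.1 ∈ U) →
      ((p + t • q).1 ∈ U ∧ (p + t • q).1 + (p + t • q).2.2 • (p + t • q).2.1 ∈ U) →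
      f1 (p + t • q) - f1 p = t • f2 (p, q, t))
    (htaylor : ∀ (x h : V) (t : K), x ∈ U → x + t • h ∈ U →
      f (x + t • h) = f x + t • f1 (x, h, 0) + t ^ 2 • a2 x h + t ^ 2 • R2 x h t)
    (hR2c : ContinuousOn (fun p : V × V × K => R2 p.1 p.2.1 p.2.2)
      {p : V × V × K | p.1 ∈ U ∧ p.1 + p.2.2 • p.2.1 ∈ U})
    (hR20 : ∀ x h : V, R2 x h 0 = 0) :
    (∀ x ∈ U, ∀ v w : V,
      a2 x (v + w) - a2 x v - a2 x w = f2 ((x, v, 0), (w, 0, 0), 0)) ∧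
    (∀ x ∈ U, ∀ h : V, (2 : K) • a2 x h = f2 ((x, h, 0), (h, 0, 0), 0)) := by
  have hpolar := fun x (hx : x ∈ U) =>
    taylorCoeff_add_sub_sub hdense hU hf1d hf2c hf2d htaylor hR2c hR20 hx
  refine ⟨hpolar, fun x hx h => ?_⟩
  rw [← hpolar x hx h h, ← two_smul K h, taylorCoeff_smul hdense hU htaylor hR2c hR20 hx]
  module

/-- Polarization in the second order Taylor expansion of a `C²`-map:
`a₂(x,v+w) − a₂(x,v) − a₂(x,w) = d²f(x)(v,w)`, where
`d²f(x)(v,w) = f^[2]((x,v,0),(w,0,0),0)`; in particular `2·a₂(x,h) = d²f(x)(h,h)`. -/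
theorem taylor_coefficient_polarization
    {K : Type*} [CommRing K] [TopologicalSpace K] [IsTopologicalRing K]
    {V W : Type*}
    [AddCommGroup V] [Module K V] [TopologicalSpace V]
    [IsTopologicalAddGroup V] [ContinuousSMul K V]
    [AddCommGroup W] [Module K W] [TopologicalSpace W]
    [IsTopologicalAddGroup W] [ContinuousSMul K W] [T2Space W]
    (hdense : Dense {t : K | IsUnit t})
    {U : Set V} (hU : IsOpen U)
    (f : V → W) (f1 : V × V × K → W)
    (f2 : (V × V × K) × (V × V × K) × K → W)
    (a2 : V → V → W) (R2 : V → V → K → W)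
    (hf1c : ContinuousOn f1 {p : V × V × K | p.1 ∈ U ∧ p.1 + p.2.2 • p.2.1 ∈ U})
    (hf1d : ∀ (x v : V) (t : K), x ∈ U → x + t • v ∈ U →
      f (x + t • v) - f x = t • f1 (x, v, t))
    (hf2c : ContinuousOn f2 {q : (V × V × K) × (V × V × K) × K |
      (q.1.1 ∈ U ∧ q.1.1 + q.1.2.2 • q.1.2.1 ∈ U) ∧
      ((q.1 + q.2.2 • q.2.1).1 ∈ U ∧
        (q.1 + q.2.2 • q.2.1).1 + (q.1 + q.2.2 • q.2.1).2.2 • (q.1 + q.2.2 • q.2.1).2.1 ∈ U)})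
    (hf2d : ∀ (p q : V × V × K) (t : K),
      (p.1 ∈ U ∧ p.1 + p.2.2 • p.2.1 ∈ U) →
      ((p + t • q).1 ∈ U ∧ (p + t • q).1 + (p + t • q).2.2 • (p + t • q).2.1 ∈ U) →
      f1 (p + t • q) - f1 p = t • f2 (p, q, t))
    (htaylor : ∀ (x h : V) (t : K), x ∈ U → x + t • h ∈ U →
      f (x + t • h) = f x + t • f1 (x, h, 0) + t ^ 2 • a2 x h + t ^ 2 • R2 x h t)
    (hR2c : ContinuousOn (fun p : V × V × K => R2 p.1 p.2.1 p.2.2)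
      {p : V × V × K | p.1 ∈ U ∧ p.1 + p.2.2 • p.2.1 ∈ U})
    (hR20 : ∀ x h : V, R2 x h 0 = 0) :
    (∀ x ∈ U, ∀ v w : V,
      a2 x (v + w) - a2 x v - a2 x w = f2 ((x, v, 0), (w, 0, 0), 0)) ∧
    (∀ x ∈ U, ∀ h : V, (2 : K) • a2 x h = f2 ((x, h, 0), (h, 0, 0), 0)) :=
  taylor_coefficient_polarization_general hdense hU f f1 f2 a2 R2 hf1d hf2c hf2d htaylor hR2c hR20
end

section
/- In the k-th iterated dual-number ring T^kK = K[ε₁,…,ε_k] (all ε_i² = 0, commuting), let δ^{(j)} be the j-th elementary symmetric polynomial in ε₁,…,ε_k. Then δ^{(i)}·δ^{(j)} = C(i+j, i)·δ^{(i+j)} (with δ^{(m)} = 0 for m > k); in particular δ^j = j!·δ^{(j)} where δ = δ^{(1)}. -/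
/-!
Expanding `e_i * e_j`, where `e_i = ∑_{|S| = i} ∏_{n ∈ S} x n` for a family of square-zero
elements, a product `∏_S x * ∏_T x` vanishes unless `S` and `T` are disjoint, and then it is
`∏_{S ∪ T} x`. Each set `U` of size `i + j` arises from exactly `C(i+j, i)` disjoint pairs
`(S, U \ S)`, which gives `e_i * e_j = C(i+j, i) • e_{i+j}`; iterating with `i = 1` gives
`e_1 ^ j = j! • e_j`. In `T^k K` the `ε_n` are such a family.
-/

/-- The ideal `(X₁², …, X_k²)` of `K[X₁,…,X_k]`, so that the quotient is the iterated
dual number ring `T^k K = K[ε₁,…,ε_k]`. -/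
noncomputable def sqIdeal (K : Type*) [CommRing K] (k : ℕ) : Ideal (MvPolynomial (Fin k) K) :=
  Ideal.span (Set.range fun n : Fin k => (MvPolynomial.X n : MvPolynomial (Fin k) K) ^ 2)

open Finset

namespace Finset
variable {σ R : Type*} [CommSemiring R]

theorem prod_mul_prod_eq_zero_of_mem_of_mem [DecidableEq σ] {x : σ → R} {S T : Finset σ} {n : σ}
    (hS : n ∈ S) (hT : n ∈ T) (hx : x n ^ 2 = 0) : (∏ m ∈ S, x m) * ∏ m ∈ T, x m = 0 := by
  rw [← mul_prod_erase S x hS, ← mul_prod_erase T x hT, mul_mul_mul_comm, ← sq, hx, zero_mul]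

theorem sum_powersetCard_prod_mul_sum_powersetCard_prod {s : Finset σ} {x : σ → R}
    (hx : ∀ n ∈ s, x n ^ 2 = 0) (i j : ℕ) :
    (∑ S ∈ s.powersetCard i, ∏ n ∈ S, x n) * (∑ T ∈ s.powersetCard j, ∏ n ∈ T, x n) =
      (i + j).choose i • ∑ U ∈ s.powersetCard (i + j), ∏ n ∈ U, x n := by
  classical
  calc _ = ∑ p ∈ (s.powersetCard i ×ˢ s.powersetCard j).filter (fun p => Disjoint p.1 p.2),
          ∏ n ∈ p.1 ∪ p.2, x n := by
        rw [sum_mul_sum, ← sum_product', sum_filter]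
        refine sum_congr rfl fun p hp => ?_
        split_ifs with hdisj
        · exact (prod_union hdisj).symm
        · obtain ⟨n, hn₁, hn₂⟩ := not_disjoint_iff.1 hdisj
          simp only [mem_product, mem_powersetCard] at hp
          exact prod_mul_prod_eq_zero_of_mem_of_mem hn₁ hn₂ (hx n (hp.1.1 hn₁))
    _ = ∑ U ∈ s.powersetCard (i + j), ∑ _S ∈ U.powersetCard i, ∏ n ∈ U, x n := by
        rw [sum_sigma']
        refine sum_nbij' (fun p => ⟨p.1 ∪ p.2, p.1⟩) (fun q => (q.2, q.1 \ q.2)) ?_ ?_ ?_ ?_ ?_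
        · simp only [mem_filter, mem_product, mem_powersetCard, mem_sigma]
          rintro ⟨S, T⟩ ⟨⟨⟨hS, rfl⟩, hT, rfl⟩, hST⟩
          exact ⟨⟨union_subset hS hT, card_union_of_disjoint hST⟩, subset_union_left, rfl⟩
        · simp only [mem_filter, mem_product, mem_powersetCard, mem_sigma]
          rintro ⟨U, S⟩ ⟨⟨hU, hUcard⟩, hSU, rfl⟩
          refine ⟨⟨⟨hSU.trans hU, rfl⟩, sdiff_subset.trans hU, ?_⟩, disjoint_sdiff⟩
          rw [card_sdiff_of_subset hSU, hUcard, Nat.add_sub_cancel_left]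
        · rintro ⟨S, T⟩ hp
          exact Prod.ext rfl (union_sdiff_cancel_left (mem_filter.1 hp).2)
        · rintro ⟨U, S⟩ hq
          have hSU := (mem_powersetCard.1 (mem_sigma.1 hq).2).1
          exact Sigma.ext (union_sdiff_of_subset hSU) HEq.rfl
        · exact fun _ _ => rfl
    _ = _ := by
        rw [smul_sum]
        refine sum_congr rfl fun U hU => ?_
        rw [sum_const, card_powersetCard, (mem_powersetCard.1 hU).2]

theorem esymm_map_val_mul_esymm_map_val {s : Finset σ} {x : σ → R} (hx : ∀ n ∈ s, x n ^ 2 = 0)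
    (i j : ℕ) :
    (s.val.map x).esymm i * (s.val.map x).esymm j =
      (i + j).choose i • (s.val.map x).esymm (i + j) := by
  simp only [esymm_map_val]
  exact sum_powersetCard_prod_mul_sum_powersetCard_prod hx i j

theorem esymm_map_val_one_pow {s : Finset σ} {x : σ → R} (hx : ∀ n ∈ s, x n ^ 2 = 0) (j : ℕ) :
    (s.val.map x).esymm 1 ^ j = j.factorial • (s.val.map x).esymm j := by
  induction j with
  | zero => simp [esymm_map_val]
  | succ j ih =>
    rw [pow_succ, ih, smul_mul_assoc, esymm_map_val_mul_esymm_map_val hx,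
      Nat.choose_succ_self_right, smul_smul, Nat.factorial_succ, Nat.mul_comm]

end Finset

theorem MvPolynomial.ringHom_esymm_eq_multiset_esymm {σ R S : Type*} [Fintype σ] [CommSemiring R]
    [CommSemiring S] (f : MvPolynomial σ R →+* S) (n : ℕ) :
    f (esymm σ R n) = (univ.val.map fun m => f (X m)).esymm n := by
  simp only [esymm, map_sum, map_prod, esymm_map_val]

/-- In `T^k K = K[ε₁,…,ε_k]`, the elementary symmetric polynomials
`δ^{(j)} = Σ ε_{i₁}⋯ε_{i_j}` satisfy `δ^{(i)}·δ^{(j)} = C(i+j,i)·δ^{(i+j)}`; in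
particular `δ^j = j!·δ^{(j)}` for `δ = δ^{(1)} = ε₁ + … + ε_k`. -/
theorem esymm_mul_in_iterated_dual_numbers {K : Type*} [CommRing K] (k : ℕ) :
    (∀ i j : ℕ,
      Ideal.Quotient.mk (sqIdeal K k) (MvPolynomial.esymm (Fin k) K i) *
        Ideal.Quotient.mk (sqIdeal K k) (MvPolynomial.esymm (Fin k) K j) =
      Nat.choose (i + j) i •
        Ideal.Quotient.mk (sqIdeal K k) (MvPolynomial.esymm (Fin k) K (i + j))) ∧
    (∀ j : ℕ,
      Ideal.Quotient.mk (sqIdeal K k) (MvPolynomial.esymm (Fin k) K 1) ^ j =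
        Nat.factorial j •
          Ideal.Quotient.mk (sqIdeal K k) (MvPolynomial.esymm (Fin k) K j)) := by
  have hsq : ∀ n ∈ (univ : Finset (Fin k)),
      Ideal.Quotient.mk (sqIdeal K k) (MvPolynomial.X n) ^ 2 = 0 := fun n _ => by
    rw [← map_pow, Ideal.Quotient.eq_zero_iff_mem]
    exact Ideal.subset_span ⟨n, rfl⟩
  simp only [MvPolynomial.ringHom_esymm_eq_multiset_esymm]
  exact ⟨esymm_map_val_mul_esymm_map_val hsq, esymm_map_val_one_pow hsq⟩
end

section
/- Let L^b denote the K-module structure on E = W × V × W pushed forward from the product structure via f_b (for b : W × V → W bilinear), i.e., addition (u,v,w) +_b (u',v',w') = (u+u', v+v', w+w'+b(u,v')+b(u',v)) and scalar action r·_b(u,v,w) = (ru, rv, rw + (r²−r)b(u,v)). Then (E, +_b, ·_b) is a K-module, and f_c : (E, L^b) → (E, L^{b+c}) is a K-linear isomorphism for all bilinear c. -/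
/-- The addition `+_b` of the linear structure `L^b` on `E = W × V × W` pushed forward
from the product structure via `f_b`. -/
def addb {K V W : Type*} [CommRing K] [AddCommGroup V] [Module K V]
    [AddCommGroup W] [Module K W]
    (b : W →ₗ[K] V →ₗ[K] W) (p q : W × V × W) : W × V × W :=
  (p.1 + q.1, p.2.1 + q.2.1, p.2.2 + q.2.2 + b p.1 q.2.1 + b q.1 p.2.1)

/-- The scalar action `·_b` of the linear structure `L^b` on `E = W × V × W`. -/
def smulb {K V W : Type*} [CommRing K] [AddCommGroup V] [Module K V]
    [AddCommGroup W] [Module K W]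
    (b : W →ₗ[K] V →ₗ[K] W) (r : K) (p : W × V × W) : W × V × W :=
  (r • p.1, r • p.2.1, r • p.2.2 + (r ^ 2 - r) • (b p.1 p.2.1))

/-- The map `f_c(u,v,w) = (u,v,w + c(u,v))`. -/
def fcMap {K V W : Type*} [CommRing K] [AddCommGroup V] [Module K V]
    [AddCommGroup W] [Module K W]
    (c : W →ₗ[K] V →ₗ[K] W) (p : W × V × W) : W × V × W :=
  (p.1, p.2.1, p.2.2 + c p.1 p.2.1)

/-! `f_b` is a bijection of `E` with inverse `f_{-b}`, and `+_b`, `·_b` are the product operations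
transported along it: `p +_b q = f_b (f_{-b} p + f_{-b} q)` and `r ·_b p = f_b (r • f_{-b} p)`.
Every module axiom for `L^b` is therefore the corresponding axiom of the product module, and since
`f_c ∘ f_b = f_{b+c}`, the map `f_c` carries the transported structure `L^b` to `L^{b+c}`. -/

section Shear

variable {K V W : Type*} [CommRing K] [AddCommGroup V] [Module K V]
  [AddCommGroup W] [Module K W]

@[simp]
theorem fcMap_fcMap (c d : W →ₗ[K] V →ₗ[K] W) (p : W × V × W) :
    fcMap c (fcMap d p) = fcMap (c + d) p := by
  simp only [fcMap, LinearMap.add_apply, add_assoc, add_comm (d _ _)]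

@[simp]
theorem fcMap_zero (p : W × V × W) : fcMap (0 : W →ₗ[K] V →ₗ[K] W) p = p := by
  simp [fcMap]

@[simp]
theorem fcMap_apply_zero (c : W →ₗ[K] V →ₗ[K] W) : fcMap c 0 = 0 := by
  simp [fcMap]

theorem fcMap_neg_fcMap (c : W →ₗ[K] V →ₗ[K] W) (p : W × V × W) :
    fcMap (-c) (fcMap c p) = p := by
  simp

theorem fcMap_fcMap_neg (c : W →ₗ[K] V →ₗ[K] W) (p : W × V × W) :
    fcMap c (fcMap (-c) p) = p := by
  simp

theorem addb_eq_fcMap (b : W →ₗ[K] V →ₗ[K] W) (p q : W × V × W) :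
    addb b p q = fcMap b (fcMap (-b) p + fcMap (-b) q) := by
  simp only [addb, fcMap, Prod.fst_add, Prod.snd_add, map_add, LinearMap.add_apply,
    LinearMap.neg_apply, Prod.mk.injEq, true_and]
  abel

theorem smulb_eq_fcMap (b : W →ₗ[K] V →ₗ[K] W) (r : K) (p : W × V × W) :
    smulb b r p = fcMap b (r • fcMap (-b) p) := by
  simp only [smulb, fcMap, Prod.smul_fst, Prod.smul_snd, map_smul, LinearMap.smul_apply,
    LinearMap.neg_apply, Prod.mk.injEq, true_and]
  module

variable (b : W →ₗ[K] V →ₗ[K] W)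

theorem addb_comm (p q : W × V × W) : addb b p q = addb b q p := by
  rw [addb_eq_fcMap, addb_eq_fcMap, add_comm]

theorem addb_assoc (p q r : W × V × W) :
    addb b (addb b p q) r = addb b p (addb b q r) := by
  simp only [addb_eq_fcMap, fcMap_neg_fcMap, add_assoc]

theorem addb_zero (p : W × V × W) : addb b p 0 = p := by
  rw [addb_eq_fcMap, fcMap_apply_zero, add_zero, fcMap_fcMap_neg]

theorem addb_fcMap_neg_neg (p : W × V × W) : addb b p (fcMap b (-fcMap (-b) p)) = 0 := by
  rw [addb_eq_fcMap, fcMap_neg_fcMap, add_neg_cancel, fcMap_apply_zero]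

theorem smulb_addb (r : K) (p q : W × V × W) :
    smulb b r (addb b p q) = addb b (smulb b r p) (smulb b r q) := by
  simp only [addb_eq_fcMap, smulb_eq_fcMap, fcMap_neg_fcMap, smul_add]

theorem smulb_add (r s : K) (p : W × V × W) :
    smulb b (r + s) p = addb b (smulb b r p) (smulb b s p) := by
  simp only [addb_eq_fcMap, smulb_eq_fcMap, fcMap_neg_fcMap, add_smul]

theorem smulb_mul (r s : K) (p : W × V × W) :
    smulb b (r * s) p = smulb b r (smulb b s p) := by
  simp only [smulb_eq_fcMap, fcMap_neg_fcMap, mul_smul]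

theorem smulb_one (p : W × V × W) : smulb b 1 p = p := by
  rw [smulb_eq_fcMap, one_smul, fcMap_fcMap_neg]

variable (c : W →ₗ[K] V →ₗ[K] W)

theorem fcMap_neg_add_fcMap (p : W × V × W) : fcMap (-(b + c)) (fcMap c p) = fcMap (-b) p := by
  rw [fcMap_fcMap, neg_add_rev, neg_add_cancel_comm]

theorem fcMap_addb (p q : W × V × W) :
    fcMap c (addb b p q) = addb (b + c) (fcMap c p) (fcMap c q) := by
  rw [addb_eq_fcMap, addb_eq_fcMap, fcMap_neg_add_fcMap, fcMap_neg_add_fcMap, fcMap_fcMap,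
    add_comm c]

theorem fcMap_smulb (r : K) (p : W × V × W) :
    fcMap c (smulb b r p) = smulb (b + c) r (fcMap c p) := by
  rw [smulb_eq_fcMap, smulb_eq_fcMap, fcMap_neg_add_fcMap, fcMap_fcMap, add_comm c]

theorem fcMap_bijective : Function.Bijective (fcMap c) :=
  Function.bijective_iff_has_inverse.mpr
    ⟨fcMap (-c), fcMap_neg_fcMap c, fcMap_fcMap_neg c⟩

end Shear

/-- `(E, +_b, ·_b)` is a `K`-module, and `f_c : (E, L^b) → (E, L^{b+c})` is a
`K`-linear isomorphism for all bilinear `c`. -/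
theorem Lb_is_module_and_fc_linear_iso {K V W : Type*} [CommRing K]
    [AddCommGroup V] [Module K V] [AddCommGroup W] [Module K W]
    (b : W →ₗ[K] V →ₗ[K] W) :
    (∀ p q : W × V × W, addb b p q = addb b q p) ∧
    (∀ p q r : W × V × W, addb b (addb b p q) r = addb b p (addb b q r)) ∧
    (∀ p : W × V × W, addb b p ((0 : W), (0 : V), (0 : W)) = p) ∧
    (∀ p : W × V × W, ∃ q : W × V × W, addb b p q = ((0 : W), (0 : V), (0 : W))) ∧
    (∀ (r : K) (p q : W × V × W), smulb b r (addb b p q) = addb b (smulb b r p) (smulb b r q)) ∧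
    (∀ (r s : K) (p : W × V × W), smulb b (r + s) p = addb b (smulb b r p) (smulb b s p)) ∧
    (∀ (r s : K) (p : W × V × W), smulb b (r * s) p = smulb b r (smulb b s p)) ∧
    (∀ p : W × V × W, smulb b (1 : K) p = p) ∧
    (∀ (c : W →ₗ[K] V →ₗ[K] W) (p q : W × V × W),
      fcMap c (addb b p q) = addb (b + c) (fcMap c p) (fcMap c q)) ∧
    (∀ (c : W →ₗ[K] V →ₗ[K] W) (r : K) (p : W × V × W),
      fcMap c (smulb b r p) = smulb (b + c) r (fcMap c p)) ∧
    (∀ c : W →ₗ[K] V →ₗ[K] W, Function.Bijective (fcMap c)) :=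
  ⟨addb_comm b, addb_assoc b, addb_zero b, fun p => ⟨_, addb_fcMap_neg_neg b p⟩,
    smulb_addb b, smulb_add b, smulb_mul b, smulb_one b, fcMap_addb b, fcMap_smulb b,
    fcMap_bijective⟩
end

section
/- Let M be a symmetric space with base point o: a set with map m : M × M → M, σ_x := m(x,·), satisfying σ_x(x) = x, σ_x² = id, and σ_x ∘ σ_y = σ_{σ_x(y)} ∘ σ_x. Define Q(x) = σ_x ∘ σ_o. Then the fundamental formula holds: Q(Q(x)y) = Q(x) Q(y) Q(x) for all x, y ∈ M. -/
theorem reflection_reflection_apply {M : Type*} (m : M → M → M)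
    (h2 : ∀ x y, m x (m x y) = y)
    (h3 : ∀ x y z, m x (m y z) = m (m x y) (m x z)) (x y z : M) :
    m (m x y) z = m x (m y (m x z)) := by
  rw [h3, h2]

theorem fundamental_formula_general {M : Type*} (m : M → M → M) (o : M)
    (h2 : ∀ x y, m x (m x y) = y)
    (h3 : ∀ x y z, m x (m y z) = m (m x y) (m x z)) :
    ∀ x y w : M,
      m (m x (m o y)) (m o w) =
        m x (m o (m y (m o (m x (m o w))))) := by
  intro x y w
  rw [reflection_reflection_apply m h2 h3, reflection_reflection_apply m h2 h3]

/-- The fundamental formula for the quadratic representation `Q(x) = σ_x ∘ σ_o` of a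
reflection (symmetric) space `(M, m)` with base point `o`:
`Q(Q(x)y) = Q(x) Q(y) Q(x)`. -/
theorem fundamental_formula {M : Type*} (m : M → M → M) (o : M)
    (h1 : ∀ x, m x x = x)
    (h2 : ∀ x y, m x (m x y) = y)
    (h3 : ∀ x y z, m x (m y z) = m (m x y) (m x z)) :
    ∀ x y w : M,
      m (m x (m o y)) (m o w) =
        m x (m o (m y (m o (m x (m o w))))) :=
  fundamental_formula_general m o h2 h3
end
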